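/- Let N ≥ 2, K ≥ 1, and let q : (Fin K)^N → ℝ be nonnegative weights with Σ_k q(k) = 1. Let |G̃⟩ ∈ ⊗_{i=1}^N ℂ^{2K} and the local isometries Φᵢ : ℂ^{2K} → ℂ^{2K}⊗ℂ² be as follows: |G̃⟩ = Σ_k √(q(k))·(1/√2)(⊗_i e_{2k_i} + ⊗_i e_{2k_i+1}), Φᵢ(e_{2k}) = e_{2k}⊗f₀, Φᵢ(e_{2k+1}) = e_{2k}⊗f₁. Define the block-diagonal experimental observable Ã_{11} on ℂ^{2K} by Ã_{11} = Σ_{k=0}^{K−1} [ (−(N−1)/√(1+(N−1)²))·(e_{2k}e_{2k}^* − e_{2k+1}e_{2k+1}^*) + (1/√(1+(N−1)²))·(e_{2k}e_{2k+1}^* + e_{2k+1}e_{2k}^*) ]. Then, under the canonical reordering isomorphism ⊗_i(ℂ^{2K}⊗ℂ²) ≅ (⊗_i ℂ^{2K}) ⊗ (⊗_i ℂ²), one has (⊗_{i=1}^N Φᵢ)((Ã_{11}⊗Id⊗⋯⊗Id)|G̃⟩) = |junk⟩ ⊗ ((A*_{11}⊗I₂⊗⋯⊗I₂)|GHZ_N⟩),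 where |junk⟩ = Σ_k √(q(k)) ⊗_i e_{2k_i}, |GHZ_N⟩ = (1/√2)(f₀^{⊗N}+f₁^{⊗N}), and A*_{11} = (−(N−1)·σz + σx)/√(1+(N−1)²) acting on ℂ² with basis f₀, f₁. -/

import Mathlib

open Matrix BigOperators Finset

noncomputable section

/-- Tensor product of `N` square matrices on `ℂ^{2K}`, indexed by `Fin N → Fin (2K)`. -/
def tensorBig (N K : ℕ) (M : Fin N → Matrix (Fin (2 * K)) (Fin (2 * K)) ℂ) :
    Matrix (Fin N → Fin (2 * K)) (Fin N → Fin (2 * K)) ℂ :=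
  Matrix.of fun f g => ∏ i, M i (f i) (g i)

/-- Tensor product of `N` 2×2 complex matrices, indexed by bit strings `Fin N → Fin 2`. -/
def tensorN (N : ℕ) (M : Fin N → Matrix (Fin 2) (Fin 2) ℂ) :
    Matrix (Fin N → Fin 2) (Fin N → Fin 2) ℂ :=
  Matrix.of fun f g => ∏ i, M i (f i) (g i)

def sigmax : Matrix (Fin 2) (Fin 2) ℂ := !![0, 1; 1, 0]
def sigmaz : Matrix (Fin 2) (Fin 2) ℂ := !![1, 0; 0, -1]

/-- The even basis index `2k : Fin (2K)`. -/
def ev {K : ℕ} (k : Fin K) : Fin (2 * K) := ⟨2 * (k : ℕ), by have := k.isLt; omega⟩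

/-- The odd basis index `2k+1 : Fin (2K)`. -/
def od {K : ℕ} (k : Fin K) : Fin (2 * K) := ⟨2 * (k : ℕ) + 1, by have := k.isLt; omega⟩

/-- The matrix entries of the SWAP-type local isometry
`Φᵢ : ℂ^{2K} → ℂ^{2K}⊗ℂ²`, `Φᵢ(e_{2k}) = e_{2k}⊗f₀`, `Φᵢ(e_{2k+1}) = e_{2k}⊗f₁`. -/
def isoEntry (K : ℕ) : Fin (2 * K) × Fin 2 → Fin (2 * K) → ℂ := fun p m =>
  if (p.1 : ℕ) = 2 * ((m : ℕ) / 2) ∧ (p.2 : ℕ) = (m : ℕ) % 2 then 1 else 0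

/-- The experimental state `|G̃⟩ = Σ_k √(q k) (1/√2)(⊗ᵢ e_{2kᵢ} + ⊗ᵢ e_{2kᵢ+1})`. -/
def Gtilde (N K : ℕ) (q : (Fin N → Fin K) → ℝ) : (Fin N → Fin (2 * K)) → ℂ := fun f =>
  ∑ k : Fin N → Fin K, ((Real.sqrt (q k) : ℝ) : ℂ) * ((Real.sqrt 2 : ℝ) : ℂ)⁻¹ *
    ((∏ i, if (f i : ℕ) = 2 * (k i : ℕ) then (1 : ℂ) else 0)
      + ∏ i, if (f i : ℕ) = 2 * (k i : ℕ) + 1 then (1 : ℂ) else 0)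

/-- The junk state `|junk⟩ = Σ_k √(q k) ⊗ᵢ e_{2kᵢ}`. -/
def junk (N K : ℕ) (q : (Fin N → Fin K) → ℝ) : (Fin N → Fin (2 * K)) → ℂ := fun g =>
  ∑ k : Fin N → Fin K, ((Real.sqrt (q k) : ℝ) : ℂ) *
    ∏ i, if (g i : ℕ) = 2 * (k i : ℕ) then (1 : ℂ) else 0

/-- The `N`-qubit GHZ state. -/
def ghz (N : ℕ) : (Fin N → Fin 2) → ℂ := fun f =>
  if f = (fun _ => 0) then ((Real.sqrt 2 : ℝ) : ℂ)⁻¹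
  else if f = (fun _ => 1) then ((Real.sqrt 2 : ℝ) : ℂ)⁻¹ else 0

/-- The block-diagonal experimental observable `Ã₁₁ = ⊕_k A₁₁^{(k)}` on `ℂ^{2K}`. -/
def Atilde11 (N K : ℕ) : Matrix (Fin (2 * K)) (Fin (2 * K)) ℂ :=
  ∑ k : Fin K,
    ((((-((N : ℝ) - 1) / Real.sqrt (1 + ((N : ℝ) - 1) ^ 2)) : ℝ) : ℂ) •
        (Matrix.single (ev k) (ev k) (1 : ℂ) - Matrix.single (od k) (od k) (1 : ℂ))
      + (((1 / Real.sqrt (1 + ((N : ℝ) - 1) ^ 2)) : ℝ) : ℂ) •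
        (Matrix.single (ev k) (od k) (1 : ℂ) + Matrix.single (od k) (ev k) (1 : ℂ)))

/-- The reference observable `A*₁₁ = (−(N−1) σz + σx)/√(1+(N−1)²)` on ℂ². -/
def Astar11 (N : ℕ) : Matrix (Fin 2) (Fin 2) ℂ :=
  ((Real.sqrt (1 + ((N : ℝ) - 1) ^ 2) : ℝ) : ℂ)⁻¹ •
    (((-((N : ℝ) - 1) : ℝ) : ℂ) • sigmaz + sigmax)

open scoped Kronecker

/-!
Split `ℂ^{2K} ≅ ℂ^K ⊗ ℂ²` by `e_{2k+t} ↦ e_k ⊗ f_t`. Under this splitting `Ã₁₁ = 1 ⊗ A*₁₁`,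
`|G̃⟩ = (Σ_k √q(k) e_k) ⊗ |GHZ_N⟩`, and `Φ = ι ⊗ 1` with `ι : e_k ↦ e_{2k}`. Hence
`Φ Ã₁₁ = ι ⊗ A*₁₁ = (1 ⊗ A*₁₁) Φ`: each local isometry intertwines the experimental observable
with the reference one, and so does their tensor product, the tensor product of matrices being
multiplicative. It remains to apply `⊗ Φ` to `|G̃⟩`, which gives `|junk⟩ ⊗ |GHZ_N⟩`.
-/

namespace Matrix

variable {ι R : Type*} [Fintype ι] [CommSemiring R] {l m n : ι → Type*}

def piTensor (M : ∀ i, Matrix (l i) (m i) R) : Matrix (∀ i, l i) (∀ i, m i) R :=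
  of fun f g => ∏ i, M i (f i) (g i)

theorem piTensor_one [∀ i, DecidableEq (m i)] :
    piTensor (fun i => (1 : Matrix (m i) (m i) R)) = 1 := by
  ext f g
  by_cases hfg : f = g
  · subst hfg
    simp [piTensor]
  · obtain ⟨i, hi⟩ := Function.ne_iff.mp hfg
    simp only [piTensor, of_apply, one_apply_ne hfg]
    exact prod_eq_zero (mem_univ i) (one_apply_ne hi)

theorem piTensor_submatrix {l' m' : ι → Type*} (M : ∀ i, Matrix (l i) (m i) R)
    (r : ∀ i, l' i → l i) (c : ∀ i, m' i → m i) :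
    piTensor (fun i => (M i).submatrix (r i) (c i)) =
      (piTensor M).submatrix (fun f i => r i (f i)) (fun g i => c i (g i)) :=
  rfl

variable [DecidableEq ι]

theorem piTensor_mul [∀ i, Fintype (m i)]
    (A : ∀ i, Matrix (l i) (m i) R) (B : ∀ i, Matrix (m i) (n i) R) :
    piTensor A * piTensor B = piTensor fun i => A i * B i := by
  ext f h
  simp only [piTensor, mul_apply, of_apply, Fintype.prod_sum, prod_mul_distrib]

/-- `u ⊗ v`, read through the reordering `⊗ᵢ (Vᵢ ⊗ Wᵢ) ≅ (⊗ᵢ Vᵢ) ⊗ (⊗ᵢ Wᵢ)`. -/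
def vecTensor {m' : ι → Type*} (u : (∀ i, m i) → R) (v : (∀ i, m' i) → R) :
    (∀ i, m i × m' i) → R :=
  fun p => u (fun i => (p i).1) * v (fun i => (p i).2)

theorem piTensor_kronecker_mulVec {l' m' : ι → Type*} [∀ i, Fintype (m i)]
    [∀ i, Fintype (m' i)]
    (A : ∀ i, Matrix (l i) (m i) R) (B : ∀ i, Matrix (l' i) (m' i) R)
    (u : (∀ i, m i) → R) (v : (∀ i, m' i) → R) :
    piTensor (fun i => A i ⊗ₖ B i) *ᵥ vecTensor u v =
      vecTensor (piTensor A *ᵥ u) (piTensor B *ᵥ v) := by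
  ext p
  simp only [mulVec, dotProduct, vecTensor, piTensor, of_apply, kroneckerMap_apply]
  rw [← (Equiv.arrowProdEquivProdArrow ι m m').symm.sum_comp, Fintype.sum_prod_type,
    sum_mul_sum]
  refine sum_congr rfl fun f _ => sum_congr rfl fun g _ => ?_
  simp only [Equiv.arrowProdEquivProdArrow_symm_apply, prod_mul_distrib]
  ring

end Matrix

def blockEquiv (K : ℕ) : Fin K × Fin 2 ≃ Fin (2 * K) :=
  finProdFinEquiv.trans (finCongr (mul_comm K 2))

@[simp]
theorem blockEquiv_apply_val {K : ℕ} (p : Fin K × Fin 2) :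
    (blockEquiv K p : ℕ) = p.2 + 2 * p.1 := rfl

theorem Atilde11_eq (N K : ℕ) :
    Atilde11 N K = ((1 : Matrix (Fin K) (Fin K) ℂ) ⊗ₖ Astar11 N).submatrix
      (blockEquiv K).symm (blockEquiv K).symm := by
  ext m n
  obtain ⟨⟨c, s⟩, rfl⟩ := (blockEquiv K).surjective m
  obtain ⟨⟨k, t⟩, rfl⟩ := (blockEquiv K).surjective n
  simp only [Atilde11, submatrix_apply, Equiv.symm_apply_apply, kronecker_apply, one_apply,
    Matrix.sum_apply, Matrix.add_apply, Matrix.sub_apply, Matrix.smul_apply, single_apply,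
    Fin.ext_iff, ev, od, blockEquiv_apply_val]
  rw [Finset.sum_eq_single c]
  · by_cases hck : c = k
    · subst hck
      fin_cases s <;> fin_cases t <;>
        simp [Astar11, sigmax, sigmaz, div_eq_inv_mul, Nat.add_comm 1]
      all_goals ring
    · have := Fin.val_ne_of_ne hck
      split_ifs <;> first | omega | simp
  · intro c' _ hc'
    have := Fin.val_ne_of_ne hc'
    split_ifs <;> first | omega | simp
  · simp

def evenInclusion (K : ℕ) : Matrix (Fin (2 * K)) (Fin K) ℂ :=
  of fun a k => if (a : ℕ) = 2 * (k : ℕ) then 1 else 0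

def isoMatrix (K : ℕ) : Matrix (Fin (2 * K) × Fin 2) (Fin (2 * K)) ℂ := of (isoEntry K)

def isoTensor (N K : ℕ) : Matrix (Fin N → Fin (2 * K) × Fin 2) (Fin N → Fin (2 * K)) ℂ :=
  piTensor fun _ => isoMatrix K

theorem isoMatrix_eq (K : ℕ) :
    isoMatrix K = (evenInclusion K ⊗ₖ (1 : Matrix (Fin 2) (Fin 2) ℂ)).submatrix id
      (blockEquiv K).symm := by
  ext ⟨a, s⟩ m
  obtain ⟨⟨k, t⟩, rfl⟩ := (blockEquiv K).surjective m
  simp only [isoMatrix, isoEntry, evenInclusion, of_apply, submatrix_apply, id,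
    Equiv.symm_apply_apply, kronecker_apply, one_apply, blockEquiv_apply_val, Fin.ext_iff]
  have := t.isLt
  simp only [show ((t : ℕ) + 2 * k) / 2 = k by omega, show ((t : ℕ) + 2 * k) % 2 = t by omega]
  split_ifs <;> simp_all

theorem isoMatrix_mul_one_kronecker (K : ℕ) (A : Matrix (Fin 2) (Fin 2) ℂ) :
    isoMatrix K * ((1 : Matrix (Fin K) (Fin K) ℂ) ⊗ₖ A).submatrix
      (blockEquiv K).symm (blockEquiv K).symm =
      ((1 : Matrix (Fin (2 * K)) (Fin (2 * K)) ℂ) ⊗ₖ A) * isoMatrix K := by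
  have hleft : (evenInclusion K ⊗ₖ (1 : Matrix (Fin 2) (Fin 2) ℂ) : Matrix _ _ ℂ) *
      ((1 : Matrix (Fin K) (Fin K) ℂ) ⊗ₖ A) = evenInclusion K ⊗ₖ A := by
    rw [← mul_kronecker_mul, Matrix.mul_one, Matrix.one_mul]
  have hright : ((1 : Matrix (Fin (2 * K)) (Fin (2 * K)) ℂ) ⊗ₖ A : Matrix _ _ ℂ) *
      (evenInclusion K ⊗ₖ (1 : Matrix (Fin 2) (Fin 2) ℂ)) = evenInclusion K ⊗ₖ A := by
    rw [← mul_kronecker_mul, Matrix.mul_one, Matrix.one_mul]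
  rw [isoMatrix_eq, submatrix_mul_equiv, hleft, ← hright]
  ext; simp [mul_apply]

def sqrtWeights {κ : Type*} (q : κ → ℝ) : κ → ℂ := fun k => ((Real.sqrt (q k) : ℝ) : ℂ)

theorem junk_eq_mulVec (N K : ℕ) (q : (Fin N → Fin K) → ℝ) :
    junk N K q = piTensor (fun _ => evenInclusion K) *ᵥ sqrtWeights q := by
  ext g
  simp only [junk, mulVec, dotProduct, piTensor, evenInclusion, sqrtWeights, of_apply, mul_comm]

theorem Gtilde_blockEquiv (N K : ℕ) (hN : N ≠ 0) (q : (Fin N → Fin K) → ℝ)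
    (p : Fin N → Fin K × Fin 2) :
    Gtilde N K q (fun i => blockEquiv K (p i)) = vecTensor (sqrtWeights q) (ghz N) p := by
  set κ : Fin N → Fin K := fun i => (p i).1
  set t : Fin N → Fin 2 := fun i => (p i).2
  have hev (k : Fin N → Fin K) :
      (∏ i, if ((blockEquiv K (p i)) : ℕ) = 2 * k i then (1 : ℂ) else 0) =
        if k = κ ∧ t = (fun _ => 0) then 1 else 0 := by
    rw [Fintype.prod_boole]
    congr 1
    simp only [κ, t, funext_iff, Fin.ext_iff, ← forall_and, blockEquiv_apply_val]
    exact propext (forall_congr' fun i => by omega)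
  have hod (k : Fin N → Fin K) :
      (∏ i, if ((blockEquiv K (p i)) : ℕ) = 2 * k i + 1 then (1 : ℂ) else 0) =
        if k = κ ∧ t = (fun _ => 1) then 1 else 0 := by
    rw [Fintype.prod_boole]
    congr 1
    simp only [κ, t, funext_iff, Fin.ext_iff, ← forall_and, blockEquiv_apply_val]
    exact propext (forall_congr' fun i => by have := (p i).2.isLt; omega)
  have h01 : (fun _ : Fin N => (0 : Fin 2)) ≠ fun _ => 1 := fun h =>
    absurd (congrFun h ⟨0, Nat.pos_of_ne_zero hN⟩) Fin.zero_ne_one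
  simp only [Gtilde, hev, hod]
  rw [Finset.sum_eq_single κ (fun k _ hk => by simp [hk]) (by simp)]
  by_cases h0 : t = fun _ => 0
  · simp [vecTensor, sqrtWeights, ghz, κ, t, h0, h01]
  · simp [vecTensor, sqrtWeights, ghz, κ, t, h0]

theorem isoTensor_mulVec_Gtilde (N K : ℕ) (hN : N ≠ 0) (q : (Fin N → Fin K) → ℝ) :
    isoTensor N K *ᵥ Gtilde N K q = vecTensor (junk N K q) (ghz N) := by
  set e := Equiv.piCongrRight fun _ : Fin N => (blockEquiv K).symm
  have hG : Gtilde N K q ∘ e.symm = vecTensor (sqrtWeights q) (ghz N) :=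
    funext (Gtilde_blockEquiv N K hN q)
  simp only [isoTensor, isoMatrix_eq, piTensor_submatrix]
  change ((piTensor _).submatrix id e) *ᵥ _ = _
  rw [submatrix_mulVec_equiv, hG, piTensor_kronecker_mulVec, ← junk_eq_mulVec, piTensor_one,
    one_mulVec, Function.comp_id]

theorem tensorBig_eq_piTensor (N K : ℕ) (M : Fin N → Matrix (Fin (2 * K)) (Fin (2 * K)) ℂ) :
    tensorBig N K M = piTensor M :=
  rfl

/-- Self-testing of the observable `A₁₁` (Appendix B): the local isometries map
`(Ã₁₁⊗Id⊗⋯⊗Id)|G̃⟩` to `|junk⟩ ⊗ ((A*₁₁⊗I₂⊗⋯⊗I₂)|GHZ_N⟩)`. -/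
theorem self_test_A11 (N K : ℕ) (hN : 2 ≤ N)
    (q : (Fin N → Fin K) → ℝ) :
    ∀ (g : Fin N → Fin (2 * K)) (b : Fin N → Fin 2),
      (∑ f : Fin N → Fin (2 * K),
          (∏ i, isoEntry K (g i, b i) (f i)) *
            ((tensorBig N K (fun i => if i = (⟨0, by omega⟩ : Fin N)
                then Atilde11 N K else 1)).mulVec (Gtilde N K q)) f)
        = junk N K q g *
            ((tensorN N (fun i => if i = (⟨0, by omega⟩ : Fin N)
                then Astar11 N else 1)).mulVec (ghz N)) b := by
  intro g b
  set M : Fin N → Matrix (Fin (2 * K)) (Fin (2 * K)) ℂ :=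
    fun i => if i = ⟨0, by omega⟩ then Atilde11 N K else 1
  set A : Fin N → Matrix (Fin 2) (Fin 2) ℂ := fun i => if i = ⟨0, by omega⟩ then Astar11 N else 1
  have hblock (i : Fin N) : M i = ((1 : Matrix (Fin K) (Fin K) ℂ) ⊗ₖ A i).submatrix
      (blockEquiv K).symm (blockEquiv K).symm := by
    by_cases hi : i = ⟨0, by omega⟩ <;> simp [M, A, hi, Atilde11_eq, submatrix_one_equiv]
  have hintertwine : isoTensor N K * tensorBig N K M =
      piTensor (fun i => (1 : Matrix (Fin (2 * K)) (Fin (2 * K)) ℂ) ⊗ₖ A i) * isoTensor N K := by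
    simp only [isoTensor, tensorBig_eq_piTensor, piTensor_mul, hblock,
      isoMatrix_mul_one_kronecker]
  calc _ = ((isoTensor N K * tensorBig N K M) *ᵥ Gtilde N K q) (fun i => (g i, b i)) := by
        rw [← mulVec_mulVec]
        rfl
    _ = (piTensor (fun i => (1 : Matrix (Fin (2 * K)) (Fin (2 * K)) ℂ) ⊗ₖ A i) *ᵥ
          (isoTensor N K *ᵥ Gtilde N K q)) (fun i => (g i, b i)) := by
        rw [hintertwine, mulVec_mulVec]
    _ = _ := by
        rw [isoTensor_mulVec_Gtilde N K (by omega), piTensor_kronecker_mulVec, piTensor_one,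
          one_mulVec]
        rfl
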